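/- (Optimality of log-odds weighting, Nitzan–Paroush) Let the ground truth be a uniformly random bit, and let m experts cast votes v_1, …, v_m ∈ {0,1} that are independent given the truth, where expert e votes correctly with probability p_e ∈ (0,1). Then the deterministic aggregation rule that outputs 1 if Σ_{e : v_e = 1} w*_e > Σ_{e : v_e = 0} w*_e and 0 if the reverse strict inequality holds, with weights w*_e = log(p_e/(1 - p_e)), maximizes the probability of outputting the ground truth: no function f : {0,1}^m → {0,1} has a strictly larger probability of matching the ground truth. -/

import Mathlib

/-!
With a uniform prior, the accuracy of a rule `f` is half the sum over vote profiles `vs` of the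
likelihood of `vs` under the truth value `f vs`. This is maximized pointwise by outputting the
truth value of larger likelihood (the maximum a posteriori rule). Taking logarithms of the two
product likelihoods, `P(vs | true) > P(vs | false)` exactly when the log-odds weights of the
experts voting `true` outweigh those of the experts voting `false`.
-/

open scoped Classical

/-- The probability that a deterministic aggregation rule `f` on `m` experts'
votes matches a uniformly random binary ground truth, when expert `e` votes
correctly with probability `p e`, independently given the truth. In the first
sum the truth is `true`, in the second it is `false`. -/
noncomputable def juryAccuracy {m : ℕ} (p : Fin m → ℝ) (f : (Fin m → Bool) → Bool) : ℝ :=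
  (1 / 2) * ∑ vs : Fin m → Bool,
      (∏ e, if vs e then p e else 1 - p e) * (if f vs then 1 else 0)
  + (1 / 2) * ∑ vs : Fin m → Bool,
      (∏ e, if vs e then 1 - p e else p e) * (if f vs then 0 else 1)

open Finset

theorem sum_ite_le_sum_ite_of_iff_lt {α M : Type*} [AddCommMonoid M] [LinearOrder M]
    [IsOrderedAddMonoid M] (s : Finset α) (a b : α → M) (f g : α → Bool)
    (hg : ∀ x, g x = true ↔ b x < a x) :
    ∑ x ∈ s, (if f x then a x else b x) ≤ ∑ x ∈ s, (if g x then a x else b x) := by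
  refine sum_le_sum fun x _ => ?_
  have hmax : (if g x then a x else b x) = max (a x) (b x) := by
    by_cases h : b x < a x
    · simp [(hg x).2 h, h.le]
    · simp [(hg x).not.2 h, not_lt.1 h]
  rw [hmax]
  split_ifs
  exacts [le_max_left _ _, le_max_right _ _]

section Likelihood

variable {ι : Type*} [Fintype ι] (p : ι → ℝ)

noncomputable def voteProbGivenTrue (vs : ι → Bool) : ℝ :=
  ∏ e, if vs e then p e else 1 - p e

noncomputable def voteProbGivenFalse (vs : ι → Bool) : ℝ :=
  ∏ e, if vs e then 1 - p e else p e

variable {p}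

theorem voteProbGivenTrue_pos (hp : ∀ e, p e ∈ Set.Ioo (0 : ℝ) 1) (vs : ι → Bool) :
    0 < voteProbGivenTrue p vs :=
  prod_pos fun e _ => by split_ifs <;> linarith [(hp e).1, (hp e).2]

theorem voteProbGivenFalse_pos (hp : ∀ e, p e ∈ Set.Ioo (0 : ℝ) 1) (vs : ι → Bool) :
    0 < voteProbGivenFalse p vs :=
  prod_pos fun e _ => by split_ifs <;> linarith [(hp e).1, (hp e).2]

theorem log_voteProbGivenTrue_sub_log_voteProbGivenFalse
    (hp : ∀ e, p e ∈ Set.Ioo (0 : ℝ) 1) (vs : ι → Bool) :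
    Real.log (voteProbGivenTrue p vs) - Real.log (voteProbGivenFalse p vs) =
      ∑ e ∈ univ.filter (fun e => vs e = true), Real.log (p e / (1 - p e)) -
        ∑ e ∈ univ.filter (fun e => vs e = false), Real.log (p e / (1 - p e)) := by
  have hp0 e : p e ≠ 0 := (hp e).1.ne'
  have hq0 e : 1 - p e ≠ 0 := (sub_pos.mpr (hp e).2).ne'
  have hterm e : (if vs e then p e else 1 - p e) ≠ 0 := by split_ifs <;> simp [hp0, hq0]
  have hterm' e : (if vs e then 1 - p e else p e) ≠ 0 := by split_ifs <;> simp [hp0, hq0]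
  rw [voteProbGivenTrue, voteProbGivenFalse, Real.log_prod (fun e _ => hterm e),
    Real.log_prod (fun e _ => hterm' e), sum_filter, sum_filter, ← sum_sub_distrib,
    ← sum_sub_distrib]
  refine sum_congr rfl fun e _ => ?_
  cases vs e <;> simp [Real.log_div (hp0 e) (hq0 e)]

theorem logOdds_sum_lt_iff (hp : ∀ e, p e ∈ Set.Ioo (0 : ℝ) 1) (vs : ι → Bool) :
    ∑ e ∈ univ.filter (fun e => vs e = false), Real.log (p e / (1 - p e)) <
        ∑ e ∈ univ.filter (fun e => vs e = true), Real.log (p e / (1 - p e)) ↔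
      voteProbGivenFalse p vs < voteProbGivenTrue p vs := by
  rw [← sub_pos, ← log_voteProbGivenTrue_sub_log_voteProbGivenFalse hp, sub_pos,
    Real.log_lt_log_iff (voteProbGivenFalse_pos hp vs) (voteProbGivenTrue_pos hp vs)]

end Likelihood

theorem juryAccuracy_eq_half_sum_likelihood {m : ℕ} (p : Fin m → ℝ) (f : (Fin m → Bool) → Bool) :
    juryAccuracy p f = (1 / 2) * ∑ vs : Fin m → Bool,
      if f vs then voteProbGivenTrue p vs else voteProbGivenFalse p vs := by
  rw [juryAccuracy, ← mul_add, ← sum_add_distrib]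
  congr 1
  refine sum_congr rfl fun vs _ => ?_
  cases f vs <;> simp [voteProbGivenTrue, voteProbGivenFalse]

/-- Nitzan–Paroush: The weighted majority rule with the log-odds
weights `w*_e = log (p e / (1 - p e))` maximizes the probability of matching
the ground truth among all deterministic aggregation rules. -/
theorem log_odds_weighting_optimal
    {m : ℕ} (p : Fin m → ℝ) (hp : ∀ e, p e ∈ Set.Ioo (0 : ℝ) 1)
    (f : (Fin m → Bool) → Bool) :
    juryAccuracy p f ≤
      juryAccuracy p (fun vs =>
        if (∑ e ∈ Finset.univ.filter (fun e => vs e = true), Real.log (p e / (1 - p e)) >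
              ∑ e ∈ Finset.univ.filter (fun e => vs e = false), Real.log (p e / (1 - p e)))
        then true else false) := by
  rw [juryAccuracy_eq_half_sum_likelihood, juryAccuracy_eq_half_sum_likelihood]
  refine mul_le_mul_of_nonneg_left (sum_ite_le_sum_ite_of_iff_lt _ _ _ _ _ fun vs => ?_)
    (by norm_num)
  rw [← logOdds_sum_lt_iff hp vs]
  split_ifs <;> simp_all
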